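/- The set of palindromes P_A = {w ∈ A* : w = reverse(w)} over an alphabet A with |A| ≥ 2 is REG-measurable with measure 0: the infimum of densities of regular supersets of P_A is 0 (and the supremum of densities of regular subsets is 0). -/

import Mathlib

open Filter Topology

/-- Number of words of `L` of length `n`. -/
noncomputable def wordCount {A : Type*} (L : Set (List A)) (n : ℕ) : ℕ :=
  Nat.card {w : List A // w ∈ L ∧ w.length = n}

/-- `L` has natural density `α`. -/
def HasNatDensity {A : Type*} [Fintype A] (L : Set (List A)) (α : ℝ) : Prop :=
  Tendsto (fun n : ℕ => (wordCount L n : ℝ) / (Fintype.card A : ℝ) ^ n) atTop (nhds α)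

/-- `L` has (Cesàro) density `α`. -/
def HasCesaroDensity {A : Type*} [Fintype A] (L : Set (List A)) (α : ℝ) : Prop :=
  Tendsto (fun n : ℕ =>
      (∑ k ∈ Finset.range n, (wordCount L k : ℝ) / (Fintype.card A : ℝ) ^ k) / n)
    atTop (nhds α)

/-- `L` is a regular language (accepted by a DFA with finitely many states). -/
def IsRegularLang {A : Type*} (L : Set (List A)) : Prop :=
  ∃ (σ : Type) (_ : Fintype σ) (M : DFA A σ), ∀ w, w ∈ M.accepts ↔ w ∈ L

/-! A palindrome of length `n` is determined by its first `⌈n/2⌉` letters, so at most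
`|A|^⌈n/2⌉` of the `|A|^n` words of length `n` are palindromes: every language of palindromes
has natural, hence Cesàro, density `0`, and the empty language attains the supremum.
Conversely, the words whose first `k` letters are the reverse of their last `k` letters contain
all palindromes, are recognised by a DFA remembering the first `k` letters and the reversed
last `k` letters read so far, and have density `|A|^(-k) → 0`. -/

section Counting

variable {A : Type*}

instance finite_wordCount_subtype (L : Set (List A)) (n : ℕ) [Finite A] :
    Finite {w : List A // w ∈ L ∧ w.length = n} :=
  have : Finite {w : List A // w.length = n} := (List.finite_length_eq A n).to_subtype
  Finite.of_injective (fun w => (⟨w.1, w.2.2⟩ : {w : List A // w.length = n}))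
    fun _ _ h => Subtype.ext (Subtype.mk.inj h)

lemma card_length_eq [Fintype A] (n : ℕ) :
    Nat.card {w : List A // w.length = n} = Fintype.card A ^ n := by
  rw [← card_vector, ← Nat.card_eq_fintype_card]
  rfl

lemma wordCount_mono [Finite A] {K L : Set (List A)} (hKL : K ⊆ L) (n : ℕ) :
    wordCount K n ≤ wordCount L n :=
  Nat.card_le_card_of_injective (fun w => ⟨w.1, hKL w.2.1, w.2.2⟩)
    fun _ _ h => Subtype.ext (Subtype.mk.inj h)

end Counting

def palindromicEnds {A : Type*} (k : ℕ) : Set (List A) :=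
  {w | w.take k = w.reverse.take k}

section PalindromicEnds

variable {A : Type*}

lemma drop_eq_reverse_take_of_mem_palindromicEnds {k : ℕ} {w : List A}
    (hw : w ∈ palindromicEnds k) : w.drop (w.length - k) = (w.take k).reverse := by
  have hw : w.take k = w.reverse.take k := hw
  rw [hw, List.reverse_take, List.length_reverse, List.reverse_reverse]

lemma palindromes_subset_palindromicEnds (k : ℕ) :
    {w : List A | w = w.reverse} ⊆ palindromicEnds k := fun w hw => by
  change w.take k = w.reverse.take k
  rw [← hw]

lemma wordCount_palindromes_le [Fintype A] (n : ℕ) :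
    wordCount {w : List A | w = w.reverse} n ≤ Fintype.card A ^ ((n + 1) / 2) := by
  rw [← card_length_eq]
  have : Finite {w : List A // w.length = (n + 1) / 2} := (List.finite_length_eq A _).to_subtype
  have hdet : ∀ w : List A, w = w.reverse → w.length = n →
      w = (w.take ((n + 1) / 2)).take (n - (n + 1) / 2) ++ (w.take ((n + 1) / 2)).reverse := by
    intro w hw hlen
    have hdrop := drop_eq_reverse_take_of_mem_palindromicEnds
      (palindromes_subset_palindromicEnds ((n + 1) / 2) hw)
    rw [hlen] at hdrop
    rw [List.take_take, min_eq_left (by omega), ← hdrop, List.take_append_drop]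
  refine Nat.card_le_card_of_injective
    (fun w => ⟨w.1.take ((n + 1) / 2), by rw [List.length_take, w.2.2]; omega⟩) ?_
  rintro ⟨u, hu, hun⟩ ⟨v, hv, hvn⟩ h
  have h : u.take ((n + 1) / 2) = v.take ((n + 1) / 2) := Subtype.mk.inj h
  refine Subtype.ext (?_ : u = v)
  rw [hdet u hu hun, hdet v hv hvn, h]

lemma wordCount_palindromicEnds [Fintype A] {k n : ℕ} (hkn : 2 * k ≤ n) :
    wordCount (palindromicEnds k : Set (List A)) n = Fintype.card A ^ (n - k) := by
  rw [← card_length_eq]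
  refine Nat.card_congr
    { toFun := fun w => ⟨w.1.take (n - k), by rw [List.length_take, w.2.2]; omega⟩
      invFun := fun u => ⟨u.1 ++ (u.1.take k).reverse, ?_, ?_⟩
      left_inv := ?_
      right_inv := ?_ }
  · have hk : (u.1.take k).length = k := by rw [List.length_take, u.2]; omega
    change (u.1 ++ (u.1.take k).reverse).take k = (u.1 ++ (u.1.take k).reverse).reverse.take k
    rw [List.take_append_of_le_length (by rw [u.2]; omega), List.reverse_append,
      List.reverse_reverse, List.take_append_of_le_length hk.ge, List.take_of_length_le hk.le]
  · rw [List.length_append, List.length_reverse, List.length_take, u.2]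
    omega
  · rintro ⟨w, hw, hlen⟩
    apply Subtype.ext
    change w.take (n - k) ++ ((w.take (n - k)).take k).reverse = w
    rw [List.take_take, min_eq_left (by omega), ← drop_eq_reverse_take_of_mem_palindromicEnds hw,
      hlen, List.take_append_drop]
  · rintro ⟨u, hu⟩
    apply Subtype.ext
    change (u ++ (u.take k).reverse).take (n - k) = u
    rw [List.take_append_of_le_length (by omega), List.take_of_length_le (by omega)]

end PalindromicEnds

section Regularity

variable {A : Type*}

lemma isRegularLang_preimage {σ : Type*} [Finite σ] (f : List A → σ) (step : σ → A → σ)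
    (hf : ∀ w a, f (w ++ [a]) = step (f w) a) (S : Set σ) : IsRegularLang (f ⁻¹' S) := by
  have : Fintype σ := Fintype.ofFinite σ
  let M : DFA A σ := ⟨step, f [], S⟩
  have heval : ∀ w, M.eval w = f w := fun w => by
    induction w using List.reverseRecOn with
    | nil => rfl
    | append_singleton w a ih => rw [M.eval_append_singleton, ih, hf]
  obtain ⟨τ, _, N, hN⟩ : Language.IsRegular (show Language A from f ⁻¹' S) :=
    Language.isRegular_iff.mpr ⟨σ, inferInstance, M, Language.ext fun w => by
      rw [DFA.mem_accepts, heval]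
      rfl⟩
  exact ⟨τ, inferInstance, N, fun w => by rw [hN]; rfl⟩

lemma isRegularLang_empty : IsRegularLang (∅ : Set (List A)) :=
  ⟨Unit, inferInstance, ⟨fun _ _ => (), (), ∅⟩, fun _ => Iff.rfl⟩

lemma isRegularLang_palindromicEnds [Finite A] (k : ℕ) :
    IsRegularLang (palindromicEnds k : Set (List A)) := by
  have : Finite {l : List A // l.length ≤ k} := (List.finite_length_le A k).to_subtype
  let f : List A → {l : List A // l.length ≤ k} × {l : List A // l.length ≤ k} :=
    fun w => (⟨w.take k, List.length_take_le k w⟩, ⟨w.reverse.take k, List.length_take_le k _⟩)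
  let step (p : {l : List A // l.length ≤ k} × {l : List A // l.length ≤ k}) (a : A) :
      {l : List A // l.length ≤ k} × {l : List A // l.length ≤ k} :=
    (⟨(p.1.1 ++ [a]).take k, List.length_take_le k _⟩, ⟨(a :: p.2.1).take k, List.length_take_le k _⟩)
  have hf : ∀ w a, f (w ++ [a]) = step (f w) a := fun w a => by
    refine Prod.ext (Subtype.ext ?_) (Subtype.ext ?_)
    · change (w ++ [a]).take k = (w.take k ++ [a]).take k
      simp only [List.take_append, List.take_take, min_self, List.length_take]
      congr 2
      omega
    · change (w ++ [a]).reverse.take k = (a :: w.reverse.take k).take k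
      cases k <;> simp [List.take_take]
  exact isRegularLang_preimage f step hf {p | p.1.1 = p.2.1}

end Regularity

section Density

variable {A : Type*} [Fintype A]

lemma HasNatDensity.hasCesaroDensity {L : Set (List A)} {α : ℝ} (h : HasNatDensity L α) :
    HasCesaroDensity L α := by
  simpa only [HasCesaroDensity, inv_mul_eq_div] using h.cesaro

lemma HasCesaroDensity.nonneg {L : Set (List A)} {α : ℝ} (h : HasCesaroDensity L α) : 0 ≤ α :=
  ge_of_tendsto' h fun _ => by positivity

lemma HasNatDensity.zero_of_subset {K L : Set (List A)} (hL : HasNatDensity L 0) (hKL : K ⊆ L) :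
    HasNatDensity K 0 :=
  squeeze_zero (fun _ => by positivity)
    (fun n => div_le_div_of_nonneg_right (by exact_mod_cast wordCount_mono hKL n) (by positivity))
    hL

lemma hasNatDensity_palindromes (hA : 1 < Fintype.card A) :
    HasNatDensity {w : List A | w = w.reverse} 0 := by
  have hq : (1 : ℝ) < Fintype.card A := by exact_mod_cast hA
  refine squeeze_zero (fun _ => by positivity) (fun n => ?_)
    ((tendsto_pow_atTop_nhds_zero_of_lt_one (by positivity) (inv_lt_one_of_one_lt₀ hq)).comp
      (Nat.tendsto_div_const_atTop two_ne_zero))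
  have hcount : (wordCount {w : List A | w = w.reverse} n : ℝ) ≤
      (Fintype.card A : ℝ) ^ ((n + 1) / 2) := by
    exact_mod_cast wordCount_palindromes_le n
  rw [Function.comp_apply, inv_pow, div_le_iff₀ (by positivity), inv_mul_eq_div,
    le_div_iff₀ (by positivity)]
  calc _ ≤ (Fintype.card A : ℝ) ^ ((n + 1) / 2) * (Fintype.card A : ℝ) ^ (n / 2) := by gcongr
    _ = (Fintype.card A : ℝ) ^ n := by rw [← pow_add]; congr 1; omega

lemma hasNatDensity_palindromicEnds [Nonempty A] (k : ℕ) :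
    HasNatDensity (palindromicEnds k : Set (List A)) ((Fintype.card A : ℝ)⁻¹ ^ k) := by
  refine tendsto_const_nhds.congr' ((eventually_ge_atTop (2 * k)).mono fun n hn => ?_)
  have hq : (0 : ℝ) < Fintype.card A := by exact_mod_cast Fintype.card_pos
  change _ = (wordCount (palindromicEnds k : Set (List A)) n : ℝ) / _
  rw [wordCount_palindromicEnds hn, Nat.cast_pow, inv_pow, eq_div_iff (by positivity),
    inv_mul_eq_div, div_eq_iff (by positivity), ← pow_add]
  congr 1
  omega

end Density

/-- The set of palindromes is `REG`-measurable with measure `0`: the infimum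
of densities of regular supersets is `0`, and the supremum of densities of
regular subsets is `0`. -/
theorem stmt12 {A : Type*} [Fintype A] (hA : 2 ≤ Fintype.card A) :
    IsGLB {β : ℝ | ∃ M : Set (List A), IsRegularLang M ∧
        {w : List A | w = w.reverse} ⊆ M ∧ HasCesaroDensity M β} 0 ∧
    IsLUB {α : ℝ | ∃ K : Set (List A), IsRegularLang K ∧
        K ⊆ {w : List A | w = w.reverse} ∧ HasCesaroDensity K α} 0 := by
  have : Nonempty A := Fintype.card_pos_iff.mp (by omega)
  have hpal : HasNatDensity {w : List A | w = w.reverse} 0 := hasNatDensity_palindromes hA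
  refine ⟨⟨fun β ⟨_, _, _, hβ⟩ => hβ.nonneg, fun b hb => ?_⟩,
    ⟨fun α ⟨_, _, hK, hα⟩ => (tendsto_nhds_unique hα (hpal.zero_of_subset hK).hasCesaroDensity).le,
      fun b hb => hb ⟨∅, isRegularLang_empty, Set.empty_subset _,
        (hpal.zero_of_subset (Set.empty_subset _)).hasCesaroDensity⟩⟩⟩
  have hq : (1 : ℝ) < Fintype.card A := by exact_mod_cast hA
  refine ge_of_tendsto' (tendsto_pow_atTop_nhds_zero_of_lt_one (by positivity)
    (inv_lt_one_of_one_lt₀ hq)) fun k => hb ⟨palindromicEnds k, isRegularLang_palindromicEnds k,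
      palindromes_subset_palindromicEnds k, (hasNatDensity_palindromicEnds k).hasCesaroDensity⟩
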